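/- In one coupled step of the path coupling, if a marked node v lies in M^d ∩ S for some d ≥ 1 (so it samples mirroredly) and its uniform draw c satisfies c ∉ {r,b} (hence c^X_v = c^Y_v = c), then the proposal is accepted in both chains or rejected in both chains; in particular X'_v = Y'_v. -/
import Mathlib


open Finset

attribute [local instance] Classical.propDecidable

namespace LGCoupling

/-- Data of the path coupling of the Local Glauber dynamics: a graph `G`, `q` colors,
the two special colors `r ≠ b`, the distinguished node `v₀`, and two colorings `X, Y`
agreeing everywhere except at `v₀`, where `X v₀ = r` and `Y v₀ = b`. -/
structure Setup (V : Type*) where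
  G : SimpleGraph V
  q : ℕ
  r : Fin q
  b : Fin q
  v0 : V
  X : V → Fin q
  Y : V → Fin q

/-- The assumptions on the pair of colorings in the path coupling. -/
def Setup.Valid {V : Type*} (s : Setup V) : Prop :=
  s.r ≠ s.b ∧ s.X s.v0 = s.r ∧ s.Y s.v0 = s.b ∧ ∀ v : V, v ≠ s.v0 → s.X v = s.Y v

variable {V : Type*} [Fintype V] [DecidableEq V]

/-- The neighborhood `N(v)` of `v` as a finset. -/
noncomputable def nbrs (G : SimpleGraph V) (v : V) : Finset V :=
  univ.filter (fun w => G.Adj v w)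

/-- The acceptance condition of the Local Glauber rule at node `v`, for current coloring `σ`
and proposals `c`: `c v ∉ ⋃_{u ∈ N(v)} {σ u, c u}` and `c u ∉ {σ v, c v}` for all `u ∈ N(v)`. -/
def Accept (G : SimpleGraph V) {q : ℕ} (σ c : V → Fin q) (v : V) : Prop :=
  ∀ u : V, G.Adj v u → c v ≠ σ u ∧ c v ≠ c u ∧ c u ≠ σ v ∧ c u ≠ c v

/-- One step of the Local Glauber rule, given proposals `c`. -/
noncomputable def stepFn (G : SimpleGraph V) {q : ℕ} (σ c : V → Fin q) : V → Fin q :=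
  fun v => if Accept G σ c v then c v else σ v

/-- `B = {v ≠ v₀ : X v ∈ {r, b}}`. -/
noncomputable def Bset (s : Setup V) : Finset V :=
  univ.filter (fun v => v ≠ s.v0 ∧ (s.X v = s.r ∨ s.X v = s.b))

/-- `K = (⋃_{v ∈ B} N⁺(v)) \ {v₀}`. -/
noncomputable def Kset (s : Setup V) : Finset V :=
  ((Bset s).biUnion (fun v => insert v (nbrs s.G v))).erase s.v0

/-- `S`: the marked nodes outside `K`. -/
noncomputable def Sset (s : Setup V) (m : V → Bool) : Finset V :=
  univ.filter (fun v => m v = true ∧ v ∉ Kset s)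

/-- Auxiliary breadth-first layering: `(layersAux s m u d).1 = M^d` and
`(layersAux s m u d).2 = ⋃_{i ≤ d} M^i`.  Here `M⁰ = F⁰ = {v₀}`,
`F^d = {v ∈ M^d : u v ∈ {r,b}}` for `d ≥ 1` (a node of `M^d`, `d ≥ 1`, samples mirroredly,
so it has flipped proposals exactly when its uniform draw `u v` is red or blue), and
`M^{d+1} = (N(F^d) ∩ S) \ ⋃_{i ≤ d} M^i`. -/
noncomputable def layersAux (s : Setup V) (m : V → Bool) (u : V → Fin s.q) :
    ℕ → Finset V × Finset V
  | 0 => ({s.v0}, {s.v0})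
  | d + 1 =>
      let prev := layersAux s m u d
      let F : Finset V :=
        if d = 0 then {s.v0} else prev.1.filter (fun v => u v = s.r ∨ u v = s.b)
      let Mnext : Finset V := ((F.biUnion (fun w => nbrs s.G w)) ∩ Sset s m) \ prev.2
      (Mnext, prev.2 ∪ Mnext)

/-- The breadth-first layer `M^d`. -/
noncomputable def layerM (s : Setup V) (m : V → Bool) (u : V → Fin s.q) (d : ℕ) : Finset V :=
  (layersAux s m u d).1

/-- The set `F^d ⊆ M^d` of nodes with flipped proposals (`F⁰ = {v₀}`). -/
noncomputable def layerF (s : Setup V) (m : V → Bool) (u : V → Fin s.q) (d : ℕ) : Finset V :=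
  if d = 0 then {s.v0} else (layerM s m u d).filter (fun v => u v = s.r ∨ u v = s.b)

/-- A node samples its proposals mirroredly iff it lies in a layer `M^d` with `d ≥ 1`. -/
def Mirrored (s : Setup V) (m : V → Bool) (u : V → Fin s.q) (v : V) : Prop :=
  ∃ d : ℕ, 1 ≤ d ∧ v ∈ layerM s m u d

/-- Exchange red and blue, leaving all other colors fixed. -/
noncomputable def flipRB (s : Setup V) (c : Fin s.q) : Fin s.q :=
  if c = s.r then s.b else if c = s.b then s.r else c

/-- Proposal of node `v` in chain `X`: its uniform draw `u v` if marked
(both consistent and mirrored sampling propose the draw itself in chain `X`),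
and its current color otherwise. -/
noncomputable def cX (s : Setup V) (m : V → Bool) (u : V → Fin s.q) : V → Fin s.q :=
  fun v => if m v then u v else s.X v

/-- Proposal of node `v` in chain `Y`: for a marked node, the draw `u v`, with red and blue
exchanged when `v` samples mirroredly; the current color if unmarked. -/
noncomputable def cY (s : Setup V) (m : V → Bool) (u : V → Fin s.q) : V → Fin s.q :=
  fun v => if m v then (if Mirrored s m u v then flipRB s (u v) else u v) else s.Y v

/-- The coloring `X'` after one coupled step. -/
noncomputable def X' (s : Setup V) (m : V → Bool) (u : V → Fin s.q) : V → Fin s.q :=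
  stepFn s.G s.X (cX s m u)

/-- The coloring `Y'` after one coupled step. -/
noncomputable def Y' (s : Setup V) (m : V → Bool) (u : V → Fin s.q) : V → Fin s.q :=
  stepFn s.G s.Y (cY s m u)

/-- Probability weight of the randomness `(m, u)` of one coupled step: each node is marked
independently with probability `γ`, and each node makes one independent uniform draw in `[q]`. -/
noncomputable def weight (γ : ℝ) (s : Setup V) (m : V → Bool) : ℝ :=
  (∏ v : V, (if m v then γ else 1 - γ)) * ((1 : ℝ) / s.q) ^ (Fintype.card V)


lemma v0_mem_snd (s : Setup V) (m : V → Bool) (u : V → Fin s.q) (d : ℕ) :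
    s.v0 ∈ (layersAux s m u d).2 := by
  induction d with
  | zero => simp [layersAux]
  | succ d ih =>
    simp only [layersAux, Finset.mem_union]
    exact Or.inl ih

lemma layerM_ne_v0 (s : Setup V) (m : V → Bool) (u : V → Fin s.q) {d : ℕ} (hd : 1 ≤ d)
    {v : V} (hv : v ∈ layerM s m u d) : v ≠ s.v0 := by
  obtain ⟨e, rfl⟩ : ∃ e, d = e + 1 := ⟨d - 1, (Nat.succ_pred_eq_of_pos hd).symm⟩
  rintro rfl
  have h0 := v0_mem_snd s m u e
  simp only [layerM, layersAux, Finset.mem_sdiff] at hv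
  exact hv.2 h0

lemma not_mirrored_v0 (s : Setup V) (m : V → Bool) (u : V → Fin s.q) :
    ¬ Mirrored s m u s.v0 := by
  rintro ⟨d, hd, hv⟩
  exact layerM_ne_v0 s m u hd hv rfl

end LGCoupling

open LGCoupling in
/-- if a marked node `v` lies in `M^d ∩ S` for some `d ≥ 1` (so it samples
mirroredly) and its uniform draw satisfies `u v ∉ {r, b}` (hence `c^X_v = c^Y_v = u v`),
then its proposal is accepted in both chains or rejected in both chains;
in particular `X' v = Y' v`. -/
theorem consistent_mirrored_same {V : Type*} [Fintype V] [DecidableEq V]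
    (s : Setup V) (hs : s.Valid) (m : V → Bool) (u : V → Fin s.q)
    (v : V) (d : ℕ) (hd : 1 ≤ d) (hvM : v ∈ layerM s m u d) (hvS : v ∈ Sset s m)
    (hur : u v ≠ s.r) (hub : u v ≠ s.b) :
    (Accept s.G s.X (cX s m u) v ↔ Accept s.G s.Y (cY s m u) v) ∧
    X' s m u v = Y' s m u v := by
  obtain ⟨hrb, hXv0, hYv0, hagree⟩ := hs
  have hm : m v = true ∧ v ∉ Kset s := by simpa [Sset] using hvS
  have hvne : v ≠ s.v0 := layerM_ne_v0 s m u hd hvM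
  have hMir : Mirrored s m u v := ⟨d, hd, hvM⟩
  have hcXv : cX s m u v = u v := by simp [cX, hm.1]
  have hcYv : cY s m u v = u v := by simp [cY, hm.1, hMir, flipRB, hur, hub]
  have hYvX : s.Y v = s.X v := (hagree v hvne).symm
  have hBK : ∀ w : V, w ≠ s.v0 → (s.X w = s.r ∨ s.X w = s.b) →
      v ∈ insert w (nbrs s.G w) → False := by
    intro w hwne hcol hin
    apply hm.2
    simp only [Kset, Finset.mem_erase, Finset.mem_biUnion]
    refine ⟨hvne, w, ?_, hin⟩
    simp only [Bset, Finset.mem_filter, Finset.mem_univ, true_and]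
    exact ⟨hwne, hcol⟩
  have hXvr : s.X v ≠ s.r ∧ s.X v ≠ s.b := by
    constructor <;> intro h
    · exact hBK v hvne (Or.inl h) (by simp)
    · exact hBK v hvne (Or.inr h) (by simp)
  have hnbr : ∀ w, s.G.Adj v w → w ≠ s.v0 → s.X w ≠ s.r ∧ s.X w ≠ s.b := by
    intro w hadj hwne
    constructor <;> intro h
    · exact hBK w hwne (Or.inl h) (by simp [nbrs, hadj.symm])
    · exact hBK w hwne (Or.inr h) (by simp [nbrs, hadj.symm])
  have key : ∀ w, s.G.Adj v w →
      ((cX s m u v ≠ s.X w ∧ cX s m u v ≠ cX s m u w ∧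
        cX s m u w ≠ s.X v ∧ cX s m u w ≠ cX s m u v) ↔
       (cY s m u v ≠ s.Y w ∧ cY s m u v ≠ cY s m u w ∧
        cY s m u w ≠ s.Y v ∧ cY s m u w ≠ cY s m u v)) := by
    intro w hadj
    rw [hcXv, hcYv, hYvX]
    by_cases hw0 : w = s.v0
    · subst hw0
      by_cases hmw : m s.v0
      · have h1 : cX s m u s.v0 = u s.v0 := by simp [cX, hmw]
        have h2 : cY s m u s.v0 = u s.v0 := by
          simp [cY, hmw, not_mirrored_v0 s m u]
        rw [h1, h2, hXv0, hYv0]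
        constructor
        · rintro ⟨-, h2, h3, h4⟩; exact ⟨hub, h2, h3, h4⟩
        · rintro ⟨-, h2, h3, h4⟩; exact ⟨hur, h2, h3, h4⟩
      · have h1 : cX s m u s.v0 = s.r := by simp [cX, hmw, hXv0]
        have h2 : cY s m u s.v0 = s.b := by simp [cY, hmw, hYv0]
        rw [h1, h2, hXv0, hYv0]
        exact iff_of_true ⟨hur, hur, fun h => hXvr.1 h.symm, fun h => hur h.symm⟩
          ⟨hub, hub, fun h => hXvr.2 h.symm, fun h => hub h.symm⟩
    · have hXw : s.X w = s.Y w := hagree w hw0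
      rw [← hXw]
      have hc : cX s m u w = cY s m u w ∨
          ((cX s m u w = s.r ∨ cX s m u w = s.b) ∧
           (cY s m u w = s.r ∨ cY s m u w = s.b)) := by
        by_cases hmw : m w
        · by_cases hMw : Mirrored s m u w
          · by_cases hwr : u w = s.r
            · right
              refine ⟨Or.inl (by simp [cX, hmw, hwr]), Or.inr ?_⟩
              simp [cY, hmw, hMw, flipRB, hwr]
            · by_cases hwb : u w = s.b
              · right
                refine ⟨Or.inr (by simp [cX, hmw, hwb]), Or.inl ?_⟩
                simp [cY, hmw, hMw, flipRB, hwb, Ne.symm hrb]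
              · left; simp [cX, cY, hmw, hMw, flipRB, hwr, hwb]
          · left; simp [cX, cY, hmw, hMw]
        · left; simp [cX, cY, hmw, hXw]
      rcases hc with hc | ⟨hcX, hcY⟩
      · rw [hc]
      · have tX : (u v ≠ cX s m u w) ∧ (cX s m u w ≠ s.X v) := by
          rcases hcX with h | h <;> rw [h]
          · exact ⟨hur, fun hh => hXvr.1 hh.symm⟩
          · exact ⟨hub, fun hh => hXvr.2 hh.symm⟩
        have tY : (u v ≠ cY s m u w) ∧ (cY s m u w ≠ s.X v) := by
          rcases hcY with h | h <;> rw [h]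
          · exact ⟨hur, fun hh => hXvr.1 hh.symm⟩
          · exact ⟨hub, fun hh => hXvr.2 hh.symm⟩
        constructor
        · rintro ⟨h1, -, -, -⟩; exact ⟨h1, tY.1, tY.2, fun hh => tY.1 hh.symm⟩
        · rintro ⟨h1, -, -, -⟩; exact ⟨h1, tX.1, tX.2, fun hh => tX.1 hh.symm⟩
  have hiff : Accept s.G s.X (cX s m u) v ↔ Accept s.G s.Y (cY s m u) v := by
    constructor
    · intro hA w hw; exact (key w hw).mp (hA w hw)
    · intro hA w hw; exact (key w hw).mpr (hA w hw)
  refine ⟨hiff, ?_⟩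
  simp only [X', Y', stepFn]
  by_cases hA : Accept s.G s.X (cX s m u) v
  · rw [if_pos hA, if_pos (hiff.mp hA), hcXv, hcYv]
  · rw [if_neg hA, if_neg (fun h => hA (hiff.mpr h)), hYvX]
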